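/- Let A, B, C, D be any permutation classes. Then the 2×2 grid class Grid(A,B;C,D) equals the intersection of the two classes Squint≤(A,B;C,D) and Squint≥(A,B;C,D). -/
import Mathlib


/-- A permutation of length `n`, given as a bijection of `Fin n`
(index/value `i` represents the entry `i+1` of `{1,…,n}`). -/
abbrev Perm' := Σ n : ℕ, Equiv.Perm (Fin n)

/-- `Contains σ π` means the pattern `σ` is contained in `π`. -/
def Contains (σ π : Perm') : Prop :=
  ∃ f : Fin σ.1 → Fin π.1, StrictMono f ∧
    ∀ i j : Fin σ.1, σ.2 i < σ.2 j ↔ π.2 (f i) < π.2 (f j)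

/-- A permutation class: a downward-closed set of permutations. -/
def IsPermClass (X : Set Perm') : Prop :=
  ∀ π ∈ X, ∀ σ : Perm', Contains σ π → σ ∈ X

/-- The avoidance set of a set `B` of permutations. -/
def Av (B : Set Perm') : Set Perm' := {π | ∀ β ∈ B, ¬ Contains β π}

/-- A set of permutations is finitely based if it is `Av B` for a finite `B`. -/
def FinitelyBased (X : Set Perm') : Prop := ∃ B : Set Perm', B.Finite ∧ X = Av B

/-- `PatternOn π S σ`: the entries of `π` at the set `S` of indices form a copy of `σ`. -/
def PatternOn (π : Perm') (S : Set (Fin π.1)) (σ : Perm') : Prop :=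
  ∃ f : Fin σ.1 → Fin π.1, StrictMono f ∧ Set.range f = S ∧
    ∀ i j : Fin σ.1, σ.2 i < σ.2 j ↔ π.2 (f i) < π.2 (f j)

/-- `PatternIn π S X`: the pattern of the entries of `π` at positions `S` lies in `X`. -/
def PatternIn (π : Perm') (S : Set (Fin π.1)) (X : Set Perm') : Prop :=
  ∃ σ ∈ X, PatternOn π S σ

/-- The permutation 21. -/
def perm21 : Perm' := ⟨2, Equiv.swap 0 1⟩
/-- The permutation 12. -/
def perm12 : Perm' := ⟨2, Equiv.refl (Fin 2)⟩
/-- The empty permutation. -/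
def emptyPerm : Perm' := ⟨0, Equiv.refl (Fin 0)⟩

/-- The 2×2 grid class `Grid(A,B;C,D)`: `A` top-left, `B` top-right, `C` bottom-left,
`D` bottom-right.  A position `i : Fin n` represents position `i+1`, so "position `≤ v`"
is `(i:ℕ) < v`, and "value `> h`" is `h ≤ (π.2 i : ℕ)`. -/
def GridClass (A B C D : Set Perm') : Set Perm' :=
  {π | ∃ v h : ℕ, v ≤ π.1 ∧ h ≤ π.1 ∧
    PatternIn π {i | (i : ℕ) < v ∧ h ≤ (π.2 i : ℕ)} A ∧
    PatternIn π {i | v ≤ (i : ℕ) ∧ h ≤ (π.2 i : ℕ)} B ∧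
    PatternIn π {i | (i : ℕ) < v ∧ (π.2 i : ℕ) < h} C ∧
    PatternIn π {i | v ≤ (i : ℕ) ∧ (π.2 i : ℕ) < h} D}

/-- Horizontal juxtaposition of `X` (left) and `Y` (right). -/
def HJuxt (X Y : Set Perm') : Set Perm' :=
  {π | ∃ v : ℕ, v ≤ π.1 ∧
    PatternIn π {i | (i : ℕ) < v} X ∧
    PatternIn π {i | v ≤ (i : ℕ)} Y}

/-- Vertical juxtaposition of `X` (top) and `Y` (bottom). -/
def VJuxt (X Y : Set Perm') : Set Perm' :=
  {π | ∃ h : ℕ, h ≤ π.1 ∧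
    PatternIn π {i | h ≤ (π.2 i : ℕ)} X ∧
    PatternIn π {i | (π.2 i : ℕ) < h} Y}

/-- `Squint≤(A,B;C,D)`: divisions `(v, ℓ, r)` with the left h-line `ℓ` no higher
than the right h-line `r`. -/
def SquintLE (A B C D : Set Perm') : Set Perm' :=
  {π | ∃ v l r : ℕ, v ≤ π.1 ∧ l ≤ π.1 ∧ r ≤ π.1 ∧ l ≤ r ∧
    PatternIn π {i | (i : ℕ) < v ∧ l ≤ (π.2 i : ℕ)} A ∧
    PatternIn π {i | (i : ℕ) < v ∧ (π.2 i : ℕ) < l} C ∧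
    PatternIn π {i | v ≤ (i : ℕ) ∧ r ≤ (π.2 i : ℕ)} B ∧
    PatternIn π {i | v ≤ (i : ℕ) ∧ (π.2 i : ℕ) < r} D}

/-- `Squint≥(A,B;C,D)`: divisions `(v, ℓ, r)` with the left h-line `ℓ` no lower
than the right h-line `r`. -/
def SquintGE (A B C D : Set Perm') : Set Perm' :=
  {π | ∃ v l r : ℕ, v ≤ π.1 ∧ l ≤ π.1 ∧ r ≤ π.1 ∧ r ≤ l ∧
    PatternIn π {i | (i : ℕ) < v ∧ l ≤ (π.2 i : ℕ)} A ∧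
    PatternIn π {i | (i : ℕ) < v ∧ (π.2 i : ℕ) < l} C ∧
    PatternIn π {i | v ≤ (i : ℕ) ∧ r ≤ (π.2 i : ℕ)} B ∧
    PatternIn π {i | v ≤ (i : ℕ) ∧ (π.2 i : ℕ) < r} D}

/-- The basis of a set `X`: minimal permutations not in `X`. -/
def PermBasis (X : Set Perm') : Set Perm' :=
  {π | π ∉ X ∧ ∀ σ : Perm', Contains σ π → σ ≠ π → σ ∈ X}

lemma exists_patternOn (π : Perm') (T : Set (Fin π.1)) :
    ∃ τ : Perm', PatternOn π T τ := by
  classical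
  obtain ⟨n, p⟩ := π
  let Tf : Finset (Fin n) := T.toFinite.toFinset
  set k := Tf.card with hk
  let e : Fin k ≃o {x // x ∈ Tf} := Tf.orderIsoOfFin rfl
  let Tf' : Finset (Fin n) := Tf.image p
  have hcard : Tf'.card = k := Finset.card_image_of_injective _ p.injective
  let g : Fin k ≃o {x // x ∈ Tf'} := Tf'.orderIsoOfFin hcard
  have hmem : ∀ i : Fin k, p (e i) ∈ Tf' := fun i =>
    Finset.mem_image_of_mem p (e i).2
  let m : Fin k → Fin k := fun i => g.symm ⟨p (e i), hmem i⟩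
  have hminj : Function.Injective m := by
    intro i j hij
    have h1 : (⟨p (e i), hmem i⟩ : {x // x ∈ Tf'}) = ⟨p (e j), hmem j⟩ :=
      g.symm.injective hij
    have h2 : p ((e i : Fin n)) = p ((e j : Fin n)) := Subtype.ext_iff.mp h1
    exact e.injective (Subtype.ext (p.injective h2))
  have hmbij : Function.Bijective m := Finite.injective_iff_bijective.mp hminj
  refine ⟨⟨k, Equiv.ofBijective m hmbij⟩, fun i => (e i : Fin n), ?_, ?_, ?_⟩
  · intro i j hij
    exact Subtype.coe_lt_coe.mpr (e.strictMono hij)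
  · ext x
    constructor
    · rintro ⟨i, rfl⟩
      exact T.toFinite.mem_toFinset.mp (e i).2
    · intro hx
      have hx' : x ∈ Tf := T.toFinite.mem_toFinset.mpr hx
      exact ⟨e.symm ⟨x, hx'⟩, by simp⟩
  · intro i j
    show m i < m j ↔ _
    rw [g.symm.lt_iff_lt]
    exact Iff.rfl

lemma patternOn_contains {π σ τ : Perm'} {S T : Set (Fin π.1)} (hTS : T ⊆ S)
    (hσ : PatternOn π S σ) (hτ : PatternOn π T τ) : Contains τ σ := by
  obtain ⟨fS, hfS, hrS, hoS⟩ := hσ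
  obtain ⟨fT, hfT, hrT, hoT⟩ := hτ
  have hsub : ∀ i : Fin τ.1, ∃ j : Fin σ.1, fS j = fT i := by
    intro i
    have h1 : fT i ∈ S := hTS (hrT ▸ Set.mem_range_self i)
    rw [← hrS] at h1
    exact h1
  choose h hh using hsub
  refine ⟨h, ?_, ?_⟩
  · intro i j hij
    have : fS (h i) < fS (h j) := by rw [hh, hh]; exact hfT hij
    exact hfS.lt_iff_lt.mp this
  · intro i j
    rw [hoT i j, ← hh i, ← hh j, hoS]

lemma patternIn_mono {X : Set Perm'} (hX : IsPermClass X) {π : Perm'}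
    {S T : Set (Fin π.1)} (hTS : T ⊆ S) (h : PatternIn π S X) : PatternIn π T X := by
  obtain ⟨σ, hσX, hσ⟩ := h
  obtain ⟨τ, hτ⟩ := exists_patternOn π T
  exact ⟨τ, hX σ hσX τ (patternOn_contains hTS hσ hτ), hτ⟩

/-- The grid class `Grid(A,B;C,D)` equals the intersection of
`Squint≤(A,B;C,D)` and `Squint≥(A,B;C,D)`. -/
theorem gridClass_eq_squint_inter (A B C D : Set Perm')
    (hA : IsPermClass A) (hB : IsPermClass B)
    (hC : IsPermClass C) (hD : IsPermClass D) :
    GridClass A B C D = SquintLE A B C D ∩ SquintGE A B C D := by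
  ext π
  constructor
  · rintro ⟨v, h, hv, hh, hGA, hGB, hGC, hGD⟩
    exact ⟨⟨v, h, h, hv, hh, hh, le_refl h, hGA, hGC, hGB, hGD⟩,
           ⟨v, h, h, hv, hh, hh, le_refl h, hGA, hGC, hGB, hGD⟩⟩
  · rintro ⟨⟨v1, l1, r1, hv1, hl1, hr1, hlr1, hA1, hC1, hB1, hD1⟩,
            ⟨v2, l2, r2, hv2, hl2, hr2, hrl2, hA2, hC2, hB2, hD2⟩⟩
    by_cases h12 : v1 ≤ v2
    · by_cases hcase : r1 ≤ l2
      · refine ⟨v1, r1, hv1, hr1, ?_, ?_, ?_, ?_⟩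
        · refine patternIn_mono hA (fun i hi => ?_) hA1
          exact ⟨hi.1, le_trans hlr1 hi.2⟩
        · exact hB1
        · refine patternIn_mono hC (fun i hi => ?_) hC2
          exact ⟨lt_of_lt_of_le hi.1 h12, lt_of_lt_of_le hi.2 hcase⟩
        · exact hD1
      · push_neg at hcase
        refine ⟨v2, l2, hv2, hl2, ?_, ?_, ?_, ?_⟩
        · exact hA2
        · refine patternIn_mono hB (fun i hi => ?_) hB2
          exact ⟨hi.1, le_trans hrl2 hi.2⟩
        · exact hC2
        · refine patternIn_mono hD (fun i hi => ?_) hD1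
          exact ⟨le_trans h12 hi.1, lt_trans hi.2 hcase⟩
    · push_neg at h12
      by_cases hcase : r2 ≤ l1
      · refine ⟨v1, l1, hv1, hl1, ?_, ?_, ?_, ?_⟩
        · exact hA1
        · refine patternIn_mono hB (fun i hi => ?_) hB2
          exact ⟨le_trans (le_of_lt h12) hi.1, le_trans hcase hi.2⟩
        · exact hC1
        · refine patternIn_mono hD (fun i hi => ?_) hD1
          exact ⟨hi.1, lt_of_lt_of_le hi.2 hlr1⟩
      · push_neg at hcase
        refine ⟨v2, r2, hv2, hr2, ?_, ?_, ?_, ?_⟩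
        · refine patternIn_mono hA (fun i hi => ?_) hA1
          exact ⟨lt_trans hi.1 h12, le_trans (le_of_lt hcase) hi.2⟩
        · exact hB2
        · refine patternIn_mono hC (fun i hi => ?_) hC2
          exact ⟨hi.1, lt_of_lt_of_le hi.2 hrl2⟩
        · exact hD2
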